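/- Let k be an algebraically closed field of characteristic p > 0, let L be a finitely generated field over k of transcendence degree n, let r = 2s be an even integer with r ≤ n, and let x_1, ..., x_n ∈ L and b_1, ..., b_r ∈ L be such that dx_1, ..., dx_n form an L-basis of Ω_{L/k}. Then for all but finitely many t ∈ k, the elements t·x_2 − b_1, t·x_1 − b_2, t·x_4 − b_3, t·x_3 − b_4, ..., t·x_{2s} − b_{2s−1}, t·x_{2s−1} − b_{2s}, x_{r+1}, ..., x_n form a separating transcendence basis of L/k. -/

import Mathlib

/-!
With `σ` the involution swapping `2j ↔ 2j + 1` below `r`, `v i = dx_{σ i}` is again a basis and the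
new family is `t • v i - db_i` for `i < r`, `v i` otherwise. For `t ≠ 0`, scaling its first `r`
members by `t⁻¹` gives `v - t⁻¹ • u` (with `u i = db_i` for `i < r`, `0` otherwise), whose
determinant in the basis `v` is the reversed characteristic polynomial of the coordinate matrix of
`u`, evaluated at `t⁻¹`. That polynomial has constant term `1`, hence finitely many roots.
-/

open Polynomial

namespace Module.Basis

variable {ι K V : Type*} [Fintype ι] [Field K] [AddCommGroup V] [Module K V]

theorem det_sub_smul [DecidableEq ι] (v : Basis ι K V) (u : ι → V) (s : K) :
    v.det (fun i => v i - s • u i) = (v.toMatrix u).charpolyRev.eval s := by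
  rw [Matrix.charpolyRev, ← coe_evalRingHom, RingHom.map_det, v.det_apply]
  congr 1
  ext i j
  rcases eq_or_ne i j with rfl | hij <;> simp [toMatrix_apply, *, mul_comm s]

theorem finite_setOf_not_linearIndependent_sub_smul (v : Basis ι K V) (u : ι → V) :
    {s : K | ¬ LinearIndependent K (fun i => v i - s • u i)}.Finite := by
  classical
  have hP : (v.toMatrix u).charpolyRev ≠ 0 := fun h => by
    simpa [h] using (v.toMatrix u).eval_charpolyRev
  refine (finite_setOfPred_isRoot hP).subset fun s hs => ?_
  by_contra hroot
  refine hs (v.is_basis_iff_det.2 (isUnit_iff_ne_zero.2 ?_)).1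
  rwa [det_sub_smul]

theorem finite_setOf_not_linearIndependent_ite_smul_sub (v : Basis ι K V) (p : ι → Prop)
    [DecidablePred p] (u : ι → V) :
    {t : K | ¬ LinearIndependent K (fun i => if p i then t • v i - u i else v i)}.Finite := by
  have hfin := (v.finite_setOf_not_linearIndependent_sub_smul
    fun i => if p i then u i else 0).preimage inv_injective.injOn
  refine (hfin.insert 0).subset fun t ht => ?_
  rcases eq_or_ne t 0 with rfl | ht0
  · exact Set.mem_insert _ _
  refine Set.mem_insert_of_mem _ fun hli => ht ?_
  convert hli.units_smul fun i => if p i then Units.mk0 t ht0 else 1 using 1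
  ext i
  by_cases hi : p i <;> simp [hi, smul_sub, smul_smul, ht0]

end Module.Basis

def swapPairsBelow (r i : ℕ) : ℕ := if i < r then (if i % 2 = 0 then i + 1 else i - 1) else i

theorem swapPairsBelow_involutive {r : ℕ} (hr : Even r) :
    Function.Involutive (swapPairsBelow r) := by
  obtain ⟨s, rfl⟩ := hr
  intro i
  unfold swapPairsBelow
  split_ifs <;> omega

theorem swapPairsBelow_lt {r n i : ℕ} (hr : Even r) (hrn : r ≤ n) (hi : i < n) :
    swapPairsBelow r i < n := by
  obtain ⟨s, rfl⟩ := hr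
  unfold swapPairsBelow
  split_ifs <;> omega

def swapPairsBelowPerm {r n : ℕ} (hr : Even r) (hrn : r ≤ n) : Equiv.Perm (Fin n) :=
  Function.Involutive.toPerm (fun i => ⟨swapPairsBelow r i, swapPairsBelow_lt hr hrn i.2⟩)
    fun i => Fin.ext (swapPairsBelow_involutive hr i)

theorem separating_basis_perturbation_even_rank_general
    (k L : Type*) [Field k] [Field L] [Algebra k L]
    (n r s : ℕ) (hrs : r = 2 * s) (hr : r ≤ n) (x b : ℕ → L)
    (hb : ∃ bas : Module.Basis (Fin n) L (KaehlerDifferential k L),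
      ∀ i : Fin n, bas i = KaehlerDifferential.D k L (x i)) :
    {t : k | ¬ ∃ bas : Module.Basis (Fin n) L (KaehlerDifferential k L),
      ∀ i : Fin n, bas i = KaehlerDifferential.D k L
        (if (i : ℕ) < r then
          (if (i : ℕ) % 2 = 0 then algebraMap k L t * x ((i : ℕ) + 1) - b i
           else algebraMap k L t * x ((i : ℕ) - 1) - b i)
         else x i)}.Finite := by
  obtain ⟨bas, hbas⟩ := hb
  have : Module.Finite L (KaehlerDifferential k L) := .of_basis bas
  let τ := swapPairsBelowPerm ⟨s, by omega⟩ hr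
  have hfin := ((bas.reindex τ).finite_setOf_not_linearIndependent_ite_smul_sub
    (fun i => (i : ℕ) < r) fun i => KaehlerDifferential.D k L (b i)).preimage
    (algebraMap k L).injective.injOn
  refine hfin.subset fun t ht hli => ht ⟨basisOfLinearIndependentOfCardEqFinrank' _ hli
    (Module.finrank_eq_card_basis bas).symm, fun i => ?_⟩
  simp only [coe_basisOfLinearIndependentOfCardEqFinrank', Module.Basis.reindex_apply, τ,
    swapPairsBelowPerm, Function.Involutive.toPerm_symm, Function.Involutive.coe_toPerm, hbas,
    swapPairsBelow]
  split_ifs <;> simp [Derivation.leibniz]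

/-- (`r` even case of Claim 3.5, valid in any characteristic `p > 0`.)
If `dx_1, …, dx_n` is an `L`-basis of `Ω_{L/k}`, `r = 2s ≤ n` and `b_1, …, b_r ∈ L`, then for
all but finitely many `t ∈ k` the elements `t·x_2 − b_1, t·x_1 − b_2, …, t·x_{2s} − b_{2s−1},
t·x_{2s−1} − b_{2s}, x_{r+1}, …, x_n` form a separating transcendence basis of `L/k`. -/
theorem separating_basis_perturbation_even_rank
    (k L : Type*) [Field k] [IsAlgClosed k] [Field L] [Algebra k L]
    (p : ℕ) [Fact p.Prime] [CharP k p]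
    (hLfg : (⊤ : IntermediateField k L).FG)
    (n r s : ℕ) (hrs : r = 2 * s) (hr : r ≤ n) (x b : ℕ → L)
    (hb : ∃ bas : Module.Basis (Fin n) L (KaehlerDifferential k L),
      ∀ i : Fin n, bas i = KaehlerDifferential.D k L (x i)) :
    {t : k | ¬ ∃ bas : Module.Basis (Fin n) L (KaehlerDifferential k L),
      ∀ i : Fin n, bas i = KaehlerDifferential.D k L
        (if (i : ℕ) < r then
          (if (i : ℕ) % 2 = 0 then algebraMap k L t * x ((i : ℕ) + 1) - b i
           else algebraMap k L t * x ((i : ℕ) - 1) - b i)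
         else x i)}.Finite :=
  separating_basis_perturbation_even_rank_general k L n r s hrs hr x b hb
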